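/- For a duplicial module M, the Dwyer–Kan operator commutes with both differentials: b_n π_n = π_{n-1} b_n and d_n π_n = π_{n+1} d_n. -/
import Mathlib


open CategoryTheory

universe v u

/-- A duplicial module in a pre-additive category `C`: objects `M n` together with
face maps `δ n i : M (n+1) ⟶ M n` (representing `∂_{n+1,i}`, meaningful for `0 ≤ i ≤ n+1`)
and degeneracy maps `σ n i : M n ⟶ M (n+1)` (representing `s_{n,i}`, meaningful for
`0 ≤ i ≤ n+1`, so including the extra degeneracy `s_{n,n+1}`), satisfying the standard
simplicial identities extended to include the extra degeneracy; the composite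
`∂_{n+1,0} s_{n,n+1}` is the duplicial operator `t_n`.
Here `f ≫ g` denotes "first apply `f`, then `g`". -/
structure DupMod (C : Type u) [Category.{v} C] [Preadditive C] where
  M : ℕ → C
  δ : ∀ n : ℕ, ℕ → (M (n + 1) ⟶ M n)
  σ : ∀ n : ℕ, ℕ → (M n ⟶ M (n + 1))
  /-- `∂_{n+1,k} ∂_{n+2,j} = ∂_{n+1,j} ∂_{n+2,k+1}` for `j ≤ k ≤ n+1`. -/
  δδ : ∀ n j k, j ≤ k → k ≤ n + 1 →
    δ (n + 1) j ≫ δ n k = δ (n + 1) (k + 1) ≫ δ n j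
  /-- `∂_{n+2,j} s_{n+1,k+1} = s_{n,k} ∂_{n+1,j}` for `1 ≤ (k+1)-j ≤ n+1`,
  i.e. `j ≤ k ≤ n+j`, with `k ≤ n+1`. -/
  δσ_lt : ∀ n j k, j ≤ k → k ≤ n + j → k ≤ n + 1 →
    σ (n + 1) (k + 1) ≫ δ (n + 1) j = δ n j ≫ σ n k
  /-- `∂_{n+1,j} s_{n,j} = 1` for `j ≤ n+1`. -/
  δσ_self : ∀ n j, j ≤ n + 1 → σ n j ≫ δ n j = 𝟙 (M n)
  /-- `∂_{n+1,j+1} s_{n,j} = 1` for `j ≤ n`. -/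
  δσ_succ : ∀ n j, j ≤ n → σ n j ≫ δ n (j + 1) = 𝟙 (M n)
  /-- `∂_{n+2,j+1} s_{n+1,k} = s_{n,k} ∂_{n+1,j}` for `k < j ≤ n+1`. -/
  δσ_gt : ∀ n j k, k < j → j ≤ n + 1 →
    σ (n + 1) k ≫ δ (n + 1) (j + 1) = δ n j ≫ σ n k
  /-- `s_{n+1,j} s_{n,k} = s_{n+1,k+1} s_{n,j}` for `j ≤ k ≤ n+1`. -/
  σσ : ∀ n j k, j ≤ k → k ≤ n + 1 →
    σ n k ≫ σ (n + 1) j = σ n j ≫ σ (n + 1) (k + 1)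

/-- Iterated composition: `cpow f m = f ≫ f ≫ ⋯ ≫ f` (`m` factors), i.e. `f^m`. -/
def cpow {C : Type u} [Category.{v} C] {A : C} (f : A ⟶ A) : ℕ → (A ⟶ A)
  | 0 => 𝟙 A
  | m + 1 => f ≫ cpow f m

namespace DupMod

variable {C : Type u} [Category.{v} C] [Preadditive C] (X : DupMod C)

/-- The simplicial differential `b_{n+1} = ∑_{i=0}^{n+1} (-1)^i ∂_{n+1,i} : M_{n+1} → M_n`. -/
def b (n : ℕ) : X.M (n + 1) ⟶ X.M n :=
  ∑ i ∈ Finset.range (n + 2), ((-1 : ℤ) ^ i) • X.δ n i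

/-- The Dwyer–Kan differential `d_n = ∑_{i=0}^{n+1} (-1)^i s_{n,i} : M_n → M_{n+1}`. -/
def d (n : ℕ) : X.M n ⟶ X.M (n + 1) :=
  ∑ i ∈ Finset.range (n + 2), ((-1 : ℤ) ^ i) • X.σ n i

/-- The duplicial operator `t_n = ∂_{n+1,0} s_{n,n+1} : M_n → M_n`. -/
def t (n : ℕ) : X.M n ⟶ X.M n := X.σ n (n + 1) ≫ X.δ n 0

/-- The Karoubi operator `κ_n = (-1)^n (∂_{n+1,0} s_{n,n+1} - s_{n-1,n} ∂_{n,0}) : M_n → M_n`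
(for `n = 0` the second term is absent). -/
def κ : ∀ n : ℕ, X.M n ⟶ X.M n
  | 0 => X.σ 0 1 ≫ X.δ 0 0
  | n + 1 => ((-1 : ℤ) ^ (n + 1)) •
      (X.σ (n + 1) (n + 2) ≫ X.δ (n + 1) 0 - X.δ n 0 ≫ X.σ n (n + 1))

end DupMod

/-- The Dwyer–Kan operator, in the form `π_n = (1 − b_{n+1}d_n)^{n+1}(1 − d_{n-1}b_n)^n`
(products composed right factor first; at `n = 0` the second factor is an empty product). -/
def DupMod.π {C : Type u} [Category.{v} C] [Preadditive C] (X : DupMod C) :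
    ∀ n : ℕ, X.M n ⟶ X.M n
  | 0 => cpow (𝟙 (X.M 0) - X.d 0 ≫ X.b 0) 1
  | n + 1 => cpow (𝟙 (X.M (n + 1)) - X.b n ≫ X.d n) (n + 1)
      ≫ cpow (𝟙 (X.M (n + 1)) - X.d (n + 1) ≫ X.b (n + 1)) (n + 2)

section Aux

variable {C : Type u} [Category.{v} C] [Preadditive C]

lemma cpow_comp_cancel {A : C} (u : A ⟶ A) {B : C} (f : A ⟶ B) (h : u ≫ f = 0) :
    ∀ k : ℕ, cpow (𝟙 A - u) k ≫ f = f
  | 0 => by simp [cpow]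
  | m + 1 => by
    rw [cpow, Category.assoc, cpow_comp_cancel u f h m, Preadditive.sub_comp,
      Category.id_comp, h, sub_zero]

lemma comp_cpow_cancel {A : C} (u : A ⟶ A) {B : C} (f : B ⟶ A) (h : f ≫ u = 0) :
    ∀ k : ℕ, f ≫ cpow (𝟙 A - u) k = f
  | 0 => by simp [cpow]
  | m + 1 => by
    rw [cpow, ← Category.assoc, Preadditive.comp_sub, Category.comp_id, h, sub_zero,
      comp_cpow_cancel u f h m]

lemma cpow_comp_swap {A B : C} (f : A ⟶ B) (g : B ⟶ A) :
    ∀ k : ℕ, cpow (𝟙 A - f ≫ g) k ≫ f = f ≫ cpow (𝟙 B - g ≫ f) k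
  | 0 => by simp [cpow]
  | m + 1 => by
    rw [cpow, Category.assoc, cpow_comp_swap f g m, cpow, ← Category.assoc, ← Category.assoc]
    congr 1
    simp only [Preadditive.sub_comp, Preadditive.comp_sub, Category.id_comp, Category.comp_id,
      Category.assoc]

namespace DupMod

variable (X : DupMod C)

lemma b_sq (n : ℕ) : X.b (n + 1) ≫ X.b n = 0 := by
  dsimp [b]
  rw [Preadditive.sum_comp]
  simp_rw [Preadditive.comp_sum, Preadditive.zsmul_comp, Preadditive.comp_zsmul, smul_smul,
    ← Finset.sum_product']
  refine Finset.sum_involution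
    (fun p _ => if p.1 ≤ p.2 then (p.2 + 1, p.1) else (p.2, p.1 - 1)) ?_ ?_ ?_ ?_
  · rintro ⟨j, k⟩ hp
    simp only [Finset.mem_product, Finset.mem_range] at hp
    by_cases h : j ≤ k
    · simp only [h, if_pos]
      rw [X.δδ n j k h (by omega)]
      have hs : ((-1 : ℤ) ^ (k + 1) * (-1) ^ j) = -((-1 : ℤ) ^ j * (-1) ^ k) := by ring
      rw [hs, neg_smul, add_neg_cancel]
    · simp only [h, if_neg, if_false]
      obtain ⟨m, rfl⟩ : ∃ m, j = m + 1 := ⟨j - 1, by omega⟩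
      simp only [Nat.add_sub_cancel]
      rw [X.δδ n k m (by omega) (by omega)]
      have hs : ((-1 : ℤ) ^ k * (-1) ^ m) = -((-1 : ℤ) ^ (m + 1) * (-1) ^ k) := by ring
      rw [hs, neg_smul, add_neg_cancel]
  · rintro ⟨j, k⟩ hp hf
    dsimp only
    split_ifs with h <;> simp only [ne_eq, Prod.mk.injEq, not_and] <;> omega
  · rintro ⟨j, k⟩ hp
    simp only [Finset.mem_product, Finset.mem_range] at hp
    dsimp only
    split_ifs with h <;> simp only [Finset.mem_product, Finset.mem_range] <;> omega
  · rintro ⟨j, k⟩ hp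
    dsimp only
    by_cases h : j ≤ k
    · rw [if_pos h]
      dsimp only
      rw [if_neg (by omega : ¬ k + 1 ≤ j)]
      simp only [Prod.mk.injEq, Nat.add_sub_cancel]
    · rw [if_neg h]
      dsimp only
      rw [if_pos (show k ≤ j - 1 by omega)]
      simp only [Prod.mk.injEq]
      exact ⟨by omega, trivial⟩

lemma d_sq (n : ℕ) : X.d n ≫ X.d (n + 1) = 0 := by
  dsimp [d]
  rw [Preadditive.sum_comp]
  simp_rw [Preadditive.comp_sum, Preadditive.zsmul_comp, Preadditive.comp_zsmul, smul_smul,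
    ← Finset.sum_product']
  refine Finset.sum_involution
    (fun p _ => if p.2 ≤ p.1 then (p.2, p.1 + 1) else (p.2 - 1, p.1)) ?_ ?_ ?_ ?_
  · rintro ⟨j, k⟩ hp
    simp only [Finset.mem_product, Finset.mem_range] at hp
    by_cases h : k ≤ j
    · simp only [h, if_pos]
      rw [X.σσ n k j h (by omega)]
      have hs : ((-1 : ℤ) ^ k * (-1) ^ (j + 1)) = -((-1 : ℤ) ^ j * (-1) ^ k) := by ring
      rw [hs, neg_smul, add_neg_cancel]
    · simp only [h, if_neg, if_false]
      obtain ⟨m, rfl⟩ : ∃ m, k = m + 1 := ⟨k - 1, by omega⟩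
      simp only [Nat.add_sub_cancel]
      rw [X.σσ n j m (by omega) (by omega)]
      have hs : ((-1 : ℤ) ^ m * (-1) ^ j) = -((-1 : ℤ) ^ j * (-1) ^ (m + 1)) := by ring
      rw [hs, neg_smul, add_neg_cancel]
  · rintro ⟨j, k⟩ hp hf
    dsimp only
    split_ifs with h <;> simp only [ne_eq, Prod.mk.injEq, not_and] <;> omega
  · rintro ⟨j, k⟩ hp
    simp only [Finset.mem_product, Finset.mem_range] at hp
    dsimp only
    split_ifs with h <;> simp only [Finset.mem_product, Finset.mem_range] <;> omega
  · rintro ⟨j, k⟩ hp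
    dsimp only
    by_cases h : k ≤ j
    · rw [if_pos h]
      dsimp only
      rw [if_neg (by omega : ¬ j + 1 ≤ k)]
      simp only [Prod.mk.injEq, Nat.add_sub_cancel]
    · rw [if_neg h]
      dsimp only
      rw [if_pos (show j ≤ k - 1 by omega)]
      simp only [Prod.mk.injEq]
      exact ⟨trivial, by omega⟩

end DupMod

end Aux

/-- For a duplicial module `M`, the Dwyer–Kan operator commutes with both
differentials: `b_n π_n = π_{n-1} b_n` and `d_n π_n = π_{n+1} d_n`. -/
theorem dwyer_kan_comm_b_d {C : Type u} [Category.{v} C] [Preadditive C]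
    (X : DupMod C) :
    (∀ n : ℕ, X.π (n + 1) ≫ X.b n = X.b n ≫ X.π n) ∧
    (∀ n : ℕ, X.π n ≫ X.d n = X.d n ≫ X.π (n + 1)) := by
  constructor
  · intro n
    have h1 : X.π (n + 1) ≫ X.b n
        = X.b n ≫ cpow (𝟙 (X.M n) - X.d n ≫ X.b n) (n + 1) := by
      dsimp only [DupMod.π]
      rw [Category.assoc,
        cpow_comp_cancel (X.d (n + 1) ≫ X.b (n + 1)) (X.b n)
          (by rw [Category.assoc, X.b_sq, Limits.comp_zero]),
        cpow_comp_swap]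
    rw [h1]
    cases n with
    | zero => rfl
    | succ m =>
      dsimp only [DupMod.π]
      rw [← Category.assoc,
        comp_cpow_cancel (X.b m ≫ X.d m) (X.b (m + 1))
          (by rw [← Category.assoc, X.b_sq, Limits.zero_comp])]
  · intro n
    have h1 : X.d n ≫ X.π (n + 1)
        = cpow (𝟙 (X.M n) - X.d n ≫ X.b n) (n + 1) ≫ X.d n := by
      dsimp only [DupMod.π]
      rw [← Category.assoc, ← cpow_comp_swap, Category.assoc,
        comp_cpow_cancel (X.d (n + 1) ≫ X.b (n + 1)) (X.d n)
          (by rw [← Category.assoc, X.d_sq, Limits.zero_comp])]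
    rw [h1]
    cases n with
    | zero => rfl
    | succ m =>
      dsimp only [DupMod.π]
      rw [Category.assoc, cpow_comp_swap, ← Category.assoc,
        cpow_comp_cancel (X.b m ≫ X.d m) (X.d (m + 1))
          (by rw [Category.assoc, X.d_sq, Limits.comp_zero]),
        ← cpow_comp_swap]
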